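/- Let ψ(t) = t^{1/2}(log₂(4/t))^{1/2} on (0,1] and let b_k, n_m, w_m, w̄_m and V be as in the construction. Then: (i) for every b ∈ (0,1], ∫₀^b t^{-1/2}·(log₂(4/t))^{-1/2} dt ≤ 2·b^{1/2}, i.e. ∫₀¹ (b^{-1/2}χ_{(0,b)}(t))/ψ(t) dt ≤ 2; (ii) for every m ≥ 0, ∫₀¹ w_m(t)/ψ(t) dt ≤ 2; consequently (iii) ∫₀¹ v(t)/ψ(t) dt ≤ 4 for every v ∈ V, so that ‖1/ψ‖_F ≤ 4, where ‖x‖_F = sup_{v∈V} ∫₀¹ x*(t) v(t) dt (note 1/ψ is nonincreasing, so (1/ψ)* = 1/ψ). -/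

import Mathlib

open MeasureTheory Set Filter Topology
open scoped ENNReal

noncomputable section

/-- Lebesgue measure restricted to `[0,1]`. -/
def mu01 : MeasureTheory.Measure ℝ := MeasureTheory.volume.restrict (Set.Icc (0:ℝ) 1)

/-- Distribution function of `x` on `[0,1]`: `μ{s ∈ [0,1] : |x s| > τ}`. -/
def distr (x : ℝ → ℝ) (τ : ℝ) : ℝ≥0∞ :=
  MeasureTheory.volume {s ∈ Set.Icc (0:ℝ) 1 | τ < |x s|}

/-- Decreasing rearrangement of `x` (as a function on `(0,1]`):
`x*(t) = inf{τ ≥ 0 : μ{|x| > τ} ≤ t}`. -/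
def rearr (x : ℝ → ℝ) (t : ℝ) : ℝ :=
  sInf {τ : ℝ | 0 ≤ τ ∧ distr x τ ≤ ENNReal.ofReal t}

/-- `ψ(t) = t^{1/2} (log₂(4/t))^{1/2}`. -/
def psiF (t : ℝ) : ℝ := t ^ ((1:ℝ)/2) * (Real.logb 2 (4 / t)) ^ ((1:ℝ)/2)

/-- `b_k = (k+2)^{-1/2} 2^{k/2}`. -/
def bseq (k : ℕ) : ℝ := ((k:ℝ) + 2) ^ (-(1:ℝ)/2) * (2:ℝ) ^ ((k:ℝ)/2)

/-- `z_k = b_k χ_{(0, 2^{-k}]}`. -/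
def zfun (k : ℕ) : ℝ → ℝ :=
  fun t => bseq k * (Set.Ioc (0:ℝ) ((2:ℝ) ^ (-(k:ℤ)))).indicator (fun _ => (1:ℝ)) t

/-- `n_0 = 1`, `n_{m+1} = max{n : Σ_{k=n_m}^{n-1} 1/(k+2) ≤ 1}`. -/
def nseq : ℕ → ℕ
  | 0 => 1
  | m + 1 => sSup {n : ℕ | ∑ k ∈ Finset.Ico (nseq m) n, (1:ℝ) / ((k:ℝ) + 2) ≤ 1}

/-- `w_m(t) = max_{n_m ≤ k < n_{m+1}} z_k(t)`. -/
def wfun (m : ℕ) (t : ℝ) : ℝ := ⨆ k ∈ Finset.Ico (nseq m) (nseq (m+1)), zfun k t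

/-- `‖w_m‖_{L²[0,1]}`. -/
def wnorm (m : ℕ) : ℝ := Real.sqrt (∫ t in Set.Icc (0:ℝ) 1, (wfun m t)^2)

/-- `V = {b^{-1/2} χ_{(0,b)} : 0 < b ≤ 1} ∪ {w_m / ‖w_m‖₂ : m ≥ 0}`. -/
def Vset : Set (ℝ → ℝ) :=
  {v | ∃ b : ℝ, 0 < b ∧ b ≤ 1 ∧
      v = fun t => b ^ (-(1:ℝ)/2) * (Set.Ioo (0:ℝ) b).indicator (fun _ => (1:ℝ)) t} ∪
  {v | ∃ m : ℕ, v = fun t => wfun m t / wnorm m}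

/-- `‖x‖_F = sup_{v ∈ V} ∫₀¹ x*(t) v(t) dt`. -/
def Fnorm (x : ℝ → ℝ) : ℝ≥0∞ :=
  ⨆ v ∈ Vset, ∫⁻ t in Set.Ioc (0:ℝ) 1, ENNReal.ofReal (rearr x t * v t)

/-- `v_m = w_m χ_{(2^{-n_{m+1}}, 2^{-n_m}]}`. -/
def vfun (m : ℕ) : ℝ → ℝ :=
  fun t => wfun m t *
    (Set.Ioc ((2:ℝ) ^ (-(nseq (m+1) : ℤ))) ((2:ℝ) ^ (-(nseq m : ℤ)))).indicator
      (fun _ => (1:ℝ)) t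

/-! ### Auxiliary lemmas -/

lemma half_int (c : ℝ) (hc : 0 < c) :
    IntegrableOn (fun t : ℝ => t ^ (-(1:ℝ)/2)) (Ioc 0 c) volume ∧
    (∫ t in Ioc (0:ℝ) c, t ^ (-(1:ℝ)/2)) = 2 * c ^ ((1:ℝ)/2) := by
  have hr : (-1:ℝ) < -(1:ℝ)/2 := by norm_num
  have hint : IntervalIntegrable (fun t : ℝ => t ^ (-(1:ℝ)/2)) volume 0 c :=
    intervalIntegral.intervalIntegrable_rpow' hr
  constructor
  · exact (intervalIntegrable_iff_integrableOn_Ioc_of_le hc.le).mp hint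
  · rw [← intervalIntegral.integral_of_le hc.le,
      integral_rpow (Or.inl hr)]
    rw [Real.zero_rpow (by norm_num)]
    norm_num
    ring

lemma logb_four_div {t : ℝ} (ht : 0 < t) : Real.logb 2 (4 / t) = 2 - Real.logb 2 t := by
  rw [Real.logb_div (by norm_num) ht.ne']
  have : Real.logb 2 4 = 2 := by
    rw [show (4:ℝ) = 2 ^ (2:ℝ) by norm_num [Real.rpow_natCast]]
    exact Real.logb_rpow (by norm_num) (by norm_num)
  rw [this]

lemma logb_ge_of_le {k : ℕ} {t : ℝ} (ht : 0 < t) (ht2 : t ≤ (2:ℝ) ^ (-(k:ℤ))) :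
    (k:ℝ) + 2 ≤ Real.logb 2 (4 / t) := by
  rw [logb_four_div ht]
  have h1 : Real.logb 2 t ≤ Real.logb 2 ((2:ℝ) ^ (-(k:ℤ))) :=
    Real.logb_le_logb_of_le (by norm_num) ht ht2
  have h2 : Real.logb 2 ((2:ℝ) ^ (-(k:ℤ))) = -(k:ℝ) := by
    rw [← Real.rpow_intCast, Real.logb_rpow (by norm_num) (by norm_num)]
    push_cast; ring
  linarith [h1.trans_eq h2]

lemma logb_ge_two {t : ℝ} (ht : 0 < t) (ht1 : t ≤ 1) : (2:ℝ) ≤ Real.logb 2 (4 / t) := by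
  have := logb_ge_of_le (k := 0) ht (by simpa using ht1)
  simpa using this

lemma psiF_pos {t : ℝ} (ht : 0 < t) (ht1 : t ≤ 1) : 0 < psiF t := by
  have h2 := logb_ge_two ht ht1
  exact mul_pos (Real.rpow_pos_of_pos ht _) (Real.rpow_pos_of_pos (by linarith) _)

lemma one_div_psiF_le {t c : ℝ} (ht : 0 < t) (hc : 0 < c) (h : c ≤ Real.logb 2 (4 / t)) :
    1 / psiF t ≤ t ^ (-(1:ℝ)/2) * c ^ (-(1:ℝ)/2) := by
  have hL : 0 < Real.logb 2 (4 / t) := lt_of_lt_of_le hc h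
  have he : -(1:ℝ)/2 = -(1/2) := by ring
  have h1 : 1 / psiF t = t ^ (-(1:ℝ)/2) * (Real.logb 2 (4 / t)) ^ (-(1:ℝ)/2) := by
    rw [he, Real.rpow_neg ht.le, Real.rpow_neg hL.le, psiF, one_div, mul_inv]
  rw [h1]
  exact mul_le_mul_of_nonneg_left
    (Real.rpow_le_rpow_of_nonpos hc h (by norm_num))
    (Real.rpow_nonneg ht.le _)

/-! ### Part (i) -/

lemma partA {b : ℝ} (hb : 0 < b) (hb1 : b ≤ 1) :
    (∫ t in Ioc (0:ℝ) b, t ^ (-(1:ℝ)/2) * (Real.logb 2 (4 / t)) ^ (-(1:ℝ)/2))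
      ≤ 2 * b ^ ((1:ℝ)/2) := by
  have key : (∫ t in Ioc (0:ℝ) b, t ^ (-(1:ℝ)/2) * (Real.logb 2 (4 / t)) ^ (-(1:ℝ)/2))
      ≤ ∫ t in Ioc (0:ℝ) b, (2:ℝ) ^ (-(1:ℝ)/2) * t ^ (-(1:ℝ)/2) := by
    apply integral_mono_of_nonneg
    · filter_upwards [ae_restrict_mem measurableSet_Ioc] with t ht
      have hL : (0:ℝ) < Real.logb 2 (4 / t) :=
        lt_of_lt_of_le two_pos (logb_ge_two ht.1 (ht.2.trans hb1))
      exact mul_nonneg (Real.rpow_nonneg ht.1.le _) (Real.rpow_nonneg hL.le _)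
    · exact ((half_int b hb).1.const_mul _)
    · filter_upwards [ae_restrict_mem measurableSet_Ioc] with t ht
      rw [mul_comm ((2:ℝ) ^ (-(1:ℝ)/2))]
      exact mul_le_mul_of_nonneg_left
        (Real.rpow_le_rpow_of_nonpos two_pos (logb_ge_two ht.1 (ht.2.trans hb1)) (by norm_num))
        (Real.rpow_nonneg ht.1.le _)
  calc _ ≤ _ := key
    _ = (2:ℝ) ^ (-(1:ℝ)/2) * (2 * b ^ ((1:ℝ)/2)) := by
        rw [integral_const_mul, (half_int b hb).2]
    _ ≤ 1 * (2 * b ^ ((1:ℝ)/2)) := by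
        apply mul_le_mul_of_nonneg_right _ (by positivity)
        rw [show -(1:ℝ)/2 = -(1/2) by ring, Real.rpow_neg (by norm_num)]
        rw [inv_le_one_iff₀]
        right
        exact Real.one_le_rpow (by norm_num) (by norm_num)
    _ = 2 * b ^ ((1:ℝ)/2) := one_mul _

lemma partA2 {b : ℝ} (hb : 0 < b) (hb1 : b ≤ 1) :
    (∫ t in Ioc (0:ℝ) 1,
        (b ^ (-(1:ℝ)/2) * (Ioo (0:ℝ) b).indicator (fun _ => (1:ℝ)) t) / psiF t) ≤ 2 := by
  set g : ℝ → ℝ := (Ioc (0:ℝ) b).indicator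
      (fun t => b ^ (-(1:ℝ)/2) * ((2:ℝ) ^ (-(1:ℝ)/2) * t ^ (-(1:ℝ)/2))) with hg
  have hbase : IntegrableOn
      (fun t : ℝ => b ^ (-(1:ℝ)/2) * ((2:ℝ) ^ (-(1:ℝ)/2) * t ^ (-(1:ℝ)/2)))
      (Ioc (0:ℝ) b) volume :=
    (((half_int b hb).1.const_mul _).const_mul _)
  have hgint : IntegrableOn g (Ioc (0:ℝ) 1) volume :=
    (hbase.integrable_indicator measurableSet_Ioc).integrableOn
  have key : (∫ t in Ioc (0:ℝ) 1,
      (b ^ (-(1:ℝ)/2) * (Ioo (0:ℝ) b).indicator (fun _ => (1:ℝ)) t) / psiF t)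
      ≤ ∫ t in Ioc (0:ℝ) 1, g t := by
    have h1 : (0:ℝ→ℝ) ≤ᵐ[volume.restrict (Ioc (0:ℝ) 1)]
        (fun t => (b ^ (-(1:ℝ)/2) * (Ioo (0:ℝ) b).indicator (fun _ => (1:ℝ)) t) / psiF t) := by
      filter_upwards [ae_restrict_mem measurableSet_Ioc] with t ht
      simp only [Pi.zero_apply]
      exact div_nonneg (mul_nonneg (Real.rpow_nonneg hb.le _)
        (indicator_nonneg (fun _ _ => zero_le_one) t)) (psiF_pos ht.1 ht.2).le
    have h2 : (fun t => (b ^ (-(1:ℝ)/2) * (Ioo (0:ℝ) b).indicator (fun _ => (1:ℝ)) t) / psiF t)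
        ≤ᵐ[volume.restrict (Ioc (0:ℝ) 1)] g := by
      filter_upwards [ae_restrict_mem measurableSet_Ioc] with t ht
      by_cases h : t ∈ Ioo (0:ℝ) b
      · rw [hg]
        simp only [indicator_of_mem h, indicator_of_mem (Ioo_subset_Ioc_self h)]
        rw [mul_one, div_eq_mul_one_div, mul_comm ((2:ℝ) ^ (-(1:ℝ)/2))]
        exact mul_le_mul_of_nonneg_left
          (one_div_psiF_le ht.1 two_pos (logb_ge_two ht.1 ht.2)) (Real.rpow_nonneg hb.le _)
      · rw [hg]
        simp only [indicator_of_notMem h, mul_zero, zero_div]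
        refine indicator_nonneg (fun t' ht' => ?_) t
        have h0 : (0:ℝ) < t' := ht'.1
        positivity
    exact integral_mono_of_nonneg h1 hgint h2
  have hval : (∫ t in Ioc (0:ℝ) 1, g t)
      = b ^ (-(1:ℝ)/2) * ((2:ℝ) ^ (-(1:ℝ)/2) * (2 * b ^ ((1:ℝ)/2))) := by
    rw [hg, integral_indicator measurableSet_Ioc,
      Measure.restrict_restrict measurableSet_Ioc,
      inter_eq_self_of_subset_left (Ioc_subset_Ioc le_rfl hb1),
      integral_const_mul, integral_const_mul, (half_int b hb).2]
  refine (key.trans_eq hval).trans ?_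
  have hbb : b ^ (-(1:ℝ)/2) * b ^ ((1:ℝ)/2) = 1 := by
    rw [← Real.rpow_add hb]; norm_num
  have h2 : (2:ℝ) ^ (-(1:ℝ)/2) ≤ 1 := by
    rw [show -(1:ℝ)/2 = -(1/2) by ring, Real.rpow_neg (by norm_num), inv_le_one_iff₀]
    right
    exact Real.one_le_rpow (by norm_num) (by norm_num)
  calc b ^ (-(1:ℝ)/2) * ((2:ℝ) ^ (-(1:ℝ)/2) * (2 * b ^ ((1:ℝ)/2)))
      = (2:ℝ) ^ (-(1:ℝ)/2) * 2 * (b ^ (-(1:ℝ)/2) * b ^ ((1:ℝ)/2)) := by ring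
    _ = (2:ℝ) ^ (-(1:ℝ)/2) * 2 := by rw [hbb, mul_one]
    _ ≤ 2 := by nlinarith [Real.rpow_nonneg (show (0:ℝ) ≤ 2 by norm_num) (-(1:ℝ)/2)]

/-! ### nseq facts -/

lemma harm_div : Tendsto (fun n => ∑ k ∈ Finset.range n, (1:ℝ) / ((k:ℝ) + 2)) atTop atTop := by
  have hns : ¬ Summable (fun k : ℕ => (1:ℝ) / ((k:ℝ) + 2)) := by
    intro h
    have h2 : Summable (fun k : ℕ => (fun n : ℕ => (1:ℝ) / (n:ℝ)) (k + 2)) := by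
      convert h using 2 with k; push_cast; ring
    exact Real.not_summable_one_div_natCast ((summable_nat_add_iff 2).mp h2)
  exact (not_summable_iff_tendsto_nat_atTop_of_nonneg
    (fun n => by positivity)).mp hns

lemma nseq_bdd (a : ℕ) :
    BddAbove {n : ℕ | ∑ k ∈ Finset.Ico a n, (1:ℝ) / ((k:ℝ) + 2) ≤ 1} := by
  obtain ⟨N, hN⟩ := (tendsto_atTop.mp harm_div
    ((∑ k ∈ Finset.range a, (1:ℝ) / ((k:ℝ) + 2)) + 2)).exists_forall_of_atTop
  refine ⟨max N a, fun n hn => ?_⟩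
  by_contra hlt
  push_neg at hlt
  have hNn : N ≤ n := le_of_lt (lt_of_le_of_lt (le_max_left _ _) hlt)
  have han : a ≤ n := le_of_lt (lt_of_le_of_lt (le_max_right _ _) hlt)
  have hsum := hN n hNn
  have hs2 : ∑ k ∈ Finset.Ico a n, (1:ℝ) / ((k:ℝ) + 2)
      = ∑ k ∈ Finset.range n, (1:ℝ) / ((k:ℝ) + 2)
        - ∑ k ∈ Finset.range a, (1:ℝ) / ((k:ℝ) + 2) :=
    Finset.sum_Ico_eq_sub _ han
  have hn' : ∑ k ∈ Finset.Ico a n, (1:ℝ) / ((k:ℝ) + 2) ≤ 1 := hn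
  linarith

lemma nseq_mem (m : ℕ) :
    nseq (m+1) ∈ {n : ℕ | ∑ k ∈ Finset.Ico (nseq m) n, (1:ℝ) / ((k:ℝ) + 2) ≤ 1} := by
  have : nseq (m+1) = sSup {n : ℕ | ∑ k ∈ Finset.Ico (nseq m) n, (1:ℝ) / ((k:ℝ) + 2) ≤ 1} := rfl
  rw [this]
  exact Nat.sSup_mem ⟨nseq m, by simp⟩ (nseq_bdd (nseq m))

lemma nseq_lt (m : ℕ) : nseq m < nseq (m+1) := by
  have hmem : nseq m + 1 ∈ {n : ℕ | ∑ k ∈ Finset.Ico (nseq m) n, (1:ℝ) / ((k:ℝ) + 2) ≤ 1} := by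
    simp only [Set.mem_setOf_eq, Finset.sum_Ico_succ_top (le_refl (nseq m)),
      Finset.Ico_self, Finset.sum_empty, zero_add]
    rw [div_le_one (by positivity)]
    linarith [Nat.cast_nonneg (α := ℝ) (nseq m)]
  exact Nat.lt_of_lt_of_le (Nat.lt_succ_self _)
    (le_csSup (nseq_bdd (nseq m)) hmem)

lemma nseq_sum_gt (m : ℕ) :
    1 - 1 / ((nseq (m+1):ℝ) + 2)
      < ∑ k ∈ Finset.Ico (nseq m) (nseq (m+1)), (1:ℝ) / ((k:ℝ) + 2) := by
  have hnot : nseq (m+1) + 1 ∉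
      {n : ℕ | ∑ k ∈ Finset.Ico (nseq m) n, (1:ℝ) / ((k:ℝ) + 2) ≤ 1} := by
    intro hmem
    have := le_csSup (nseq_bdd (nseq m)) hmem
    have h2 : nseq (m+1) + 1 ≤ nseq (m+1) := this
    omega
  simp only [Set.mem_setOf_eq, not_le] at hnot
  rw [Finset.sum_Ico_succ_top (le_of_lt (nseq_lt m))] at hnot
  linarith

/-! ### zfun/wfun facts -/

lemma bseq_pos (k : ℕ) : 0 < bseq k := by
  unfold bseq; positivity

lemma zfun_nonneg (k : ℕ) (t : ℝ) : 0 ≤ zfun k t :=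
  mul_nonneg (bseq_pos k).le (Set.indicator_nonneg (fun _ _ => zero_le_one) t)

lemma zfun_le (k : ℕ) (t : ℝ) : zfun k t ≤ bseq k := by
  unfold zfun
  by_cases h : t ∈ Set.Ioc (0:ℝ) ((2:ℝ) ^ (-(k:ℤ)))
  · rw [Set.indicator_of_mem h, mul_one]
  · rw [Set.indicator_of_notMem h, mul_zero]; exact (bseq_pos k).le

lemma zfun_measurable (k : ℕ) : Measurable (zfun k) :=
  (measurable_const.indicator measurableSet_Ioc).const_mul _

lemma wfun_le_sum (m : ℕ) (t : ℝ) :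
    wfun m t ≤ ∑ k ∈ Finset.Ico (nseq m) (nseq (m+1)), zfun k t := by
  refine Real.iSup_le (fun k => ?_) (Finset.sum_nonneg fun k _ => zfun_nonneg k t)
  refine Real.iSup_le (fun hk => ?_) (Finset.sum_nonneg fun k _ => zfun_nonneg k t)
  exact Finset.single_le_sum (fun j _ => zfun_nonneg j t) hk

lemma wfun_nonneg (m : ℕ) (t : ℝ) : 0 ≤ wfun m t :=
  Real.iSup_nonneg fun k => Real.iSup_nonneg fun _ => zfun_nonneg k t

lemma wfun_bdd (m : ℕ) (t : ℝ) :
    BddAbove (Set.range fun k => ⨆ (_ : k ∈ Finset.Ico (nseq m) (nseq (m+1))), zfun k t) := by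
  refine ⟨∑ k ∈ Finset.Ico (nseq m) (nseq (m+1)), zfun k t, fun x ⟨k, hk⟩ => ?_⟩
  subst hk
  refine Real.iSup_le (fun hk => ?_) (Finset.sum_nonneg fun k _ => zfun_nonneg k t)
  exact Finset.single_le_sum (fun j _ => zfun_nonneg j t) hk

lemma le_wfun (m : ℕ) (t : ℝ) (k : ℕ) (hk : k ∈ Finset.Ico (nseq m) (nseq (m+1))) :
    zfun k t ≤ wfun m t := by
  refine le_ciSup_of_le (wfun_bdd m t) k ?_
  rw [ciSup_pos hk]

lemma wfun_measurable (m : ℕ) : Measurable (wfun m) := by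
  apply Measurable.iSup
  intro k
  by_cases hk : k ∈ Finset.Ico (nseq m) (nseq (m+1))
  · simp only [ciSup_pos hk]
    exact zfun_measurable k
  · have : IsEmpty (k ∈ Finset.Ico (nseq m) (nseq (m+1))) := ⟨hk⟩
    simp only [Real.iSup_of_isEmpty]
    exact measurable_const

/-! ### gmaj: integrable majorant of z_k/ψ -/

def gmaj (k : ℕ) : ℝ → ℝ :=
  (Ioc (0:ℝ) ((2:ℝ) ^ (-(k:ℤ)))).indicator
    (fun t => bseq k * (((k:ℝ) + 2) ^ (-(1:ℝ)/2) * t ^ (-(1:ℝ)/2)))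

lemma two_zpow_pos (k : ℕ) : (0:ℝ) < (2:ℝ) ^ (-(k:ℤ)) := by positivity
lemma two_zpow_le_one (k : ℕ) : (2:ℝ) ^ (-(k:ℤ)) ≤ 1 :=
  zpow_le_one_of_nonpos₀ (by norm_num) (by simp)

lemma gmaj_nonneg (k : ℕ) (t : ℝ) : 0 ≤ gmaj k t := by
  refine Set.indicator_nonneg (fun t' ht' => ?_) t
  have h0 : (0:ℝ) < t' := ht'.1
  have : (0:ℝ) < bseq k := bseq_pos k
  positivity

lemma gmaj_integrable (k : ℕ) : IntegrableOn (gmaj k) (Ioc (0:ℝ) 1) volume := by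
  have : IntegrableOn (fun t : ℝ => bseq k * (((k:ℝ) + 2) ^ (-(1:ℝ)/2) * t ^ (-(1:ℝ)/2)))
      (Ioc (0:ℝ) ((2:ℝ) ^ (-(k:ℤ)))) volume :=
    ((half_int _ (two_zpow_pos k)).1.const_mul _).const_mul _
  exact (this.integrable_indicator measurableSet_Ioc).integrableOn

lemma gmaj_integral (k : ℕ) : (∫ t in Ioc (0:ℝ) 1, gmaj k t) = 2 / ((k:ℝ) + 2) := by
  rw [gmaj, integral_indicator measurableSet_Ioc,
    Measure.restrict_restrict measurableSet_Ioc,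
    inter_eq_self_of_subset_left (Ioc_subset_Ioc le_rfl (two_zpow_le_one k)),
    integral_const_mul, integral_const_mul, (half_int _ (two_zpow_pos k)).2]
  have hz : ((2:ℝ) ^ (-(k:ℤ))) = (2:ℝ) ^ ((-(k:ℕ) : ℝ)) := by
    rw [← Real.rpow_intCast]; norm_num
  rw [hz]
  have hk2 : (0:ℝ) < (k:ℝ) + 2 := by positivity
  have h1 : ((2:ℝ) ^ ((-(k:ℕ) : ℝ))) ^ ((1:ℝ)/2) = (2:ℝ) ^ ((-(k:ℝ))/2) := by
    rw [← Real.rpow_mul (by norm_num)]; ring_nf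
  have h2 : ((k:ℝ)+2) ^ (-(1:ℝ)/2) * ((k:ℝ)+2) ^ (-(1:ℝ)/2) = ((k:ℝ)+2) ^ (-1:ℝ) := by
    rw [← Real.rpow_add hk2]; norm_num
  have h3 : (2:ℝ) ^ ((k:ℝ)/2) * (2:ℝ) ^ ((-(k:ℝ))/2) = 1 := by
    rw [← Real.rpow_add (by norm_num : (0:ℝ) < 2)]
    rw [show (k:ℝ)/2 + (-(k:ℝ))/2 = 0 by ring, Real.rpow_zero]
  have hexp : bseq k * (((k:ℝ)+2) ^ (-(1:ℝ)/2) * (2 * ((2:ℝ) ^ ((-(k:ℕ) : ℝ))) ^ ((1:ℝ)/2)))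
      = 2 * (((k:ℝ)+2) ^ (-(1:ℝ)/2) * ((k:ℝ)+2) ^ (-(1:ℝ)/2))
        * ((2:ℝ) ^ ((k:ℝ)/2) * (2:ℝ) ^ ((-(k:ℝ))/2)) := by
    rw [h1, bseq]; ring
  rw [hexp, h2, h3, mul_one, Real.rpow_neg_one, div_eq_mul_inv]

lemma zdiv_le_gmaj (k : ℕ) {t : ℝ} (ht : t ∈ Ioc (0:ℝ) 1) :
    zfun k t / psiF t ≤ gmaj k t := by
  by_cases h : t ∈ Ioc (0:ℝ) ((2:ℝ) ^ (-(k:ℤ)))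
  · rw [gmaj, indicator_of_mem h, zfun, indicator_of_mem h, mul_one, div_eq_mul_one_div]
    rw [mul_comm (((k:ℝ) + 2) ^ (-(1:ℝ)/2))]
    exact mul_le_mul_of_nonneg_left
      (one_div_psiF_le ht.1 (by positivity) (logb_ge_of_le ht.1 h.2))
      (bseq_pos k).le
  · rw [gmaj, indicator_of_notMem h, zfun, indicator_of_notMem h, mul_zero, zero_div]

/-! ### Part (ii) -/

lemma partB (m : ℕ) : (∫ t in Ioc (0:ℝ) 1, wfun m t / psiF t) ≤ 2 := by
  set s := Finset.Ico (nseq m) (nseq (m+1)) with hs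
  set G : ℝ → ℝ := fun t => ∑ k ∈ s, gmaj k t with hG
  have hGint : IntegrableOn G (Ioc (0:ℝ) 1) volume :=
    integrable_finset_sum s (fun k _ => gmaj_integrable k)
  have h1 : (0:ℝ→ℝ) ≤ᵐ[volume.restrict (Ioc (0:ℝ) 1)] (fun t => wfun m t / psiF t) := by
    filter_upwards [ae_restrict_mem measurableSet_Ioc] with t ht
    simp only [Pi.zero_apply]
    exact div_nonneg (wfun_nonneg m t) (psiF_pos ht.1 ht.2).le
  have h2 : (fun t => wfun m t / psiF t) ≤ᵐ[volume.restrict (Ioc (0:ℝ) 1)] G := by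
    filter_upwards [ae_restrict_mem measurableSet_Ioc] with t ht
    calc wfun m t / psiF t ≤ (∑ k ∈ s, zfun k t) / psiF t := by
          rw [div_eq_mul_inv, div_eq_mul_inv]
          exact mul_le_mul_of_nonneg_right (wfun_le_sum m t)
            (inv_nonneg.mpr (psiF_pos ht.1 ht.2).le)
      _ = ∑ k ∈ s, zfun k t / psiF t := by rw [Finset.sum_div]
      _ ≤ G t := Finset.sum_le_sum (fun k _ => zdiv_le_gmaj k ht)
  have key := integral_mono_of_nonneg h1 hGint h2
  have hval : (∫ t in Ioc (0:ℝ) 1, G t) = ∑ k ∈ s, 2 / ((k:ℝ) + 2) := by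
    rw [hG, integral_finset_sum s (fun k _ => gmaj_integrable k)]
    exact Finset.sum_congr rfl (fun k _ => gmaj_integral k)
  refine key.trans ?_
  rw [hval]
  have : ∑ k ∈ s, 2 / ((k:ℝ) + 2) = 2 * ∑ k ∈ s, 1 / ((k:ℝ) + 2) := by
    rw [Finset.mul_sum]
    exact Finset.sum_congr rfl (fun k _ => by ring)
  rw [this]
  have := nseq_mem m
  simp only [Set.mem_setOf_eq] at this
  linarith

/-! ### wnorm lower bound -/

def hlow (m : ℕ) : ℝ → ℝ := fun t =>
  ∑ k ∈ Finset.Ico (nseq m) (nseq (m+1)),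
    (bseq k)^2 * (Ioc ((2:ℝ) ^ (-(k:ℤ)-1)) ((2:ℝ) ^ (-(k:ℤ)))).indicator (fun _ => (1:ℝ)) t

lemma Ik_lt_absurd {k j : ℕ} (h : k < j) {t : ℝ}
    (hk : t ∈ Ioc ((2:ℝ) ^ (-(k:ℤ)-1)) ((2:ℝ) ^ (-(k:ℤ))))
    (hj : t ∈ Ioc ((2:ℝ) ^ (-(j:ℤ)-1)) ((2:ℝ) ^ (-(j:ℤ)))) : False := by
  have h1 : ((2:ℝ) ^ (-(j:ℤ))) ≤ (2:ℝ) ^ (-(k:ℤ)-1) := by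
    apply zpow_le_zpow_right₀ (by norm_num)
    omega
  exact absurd (hj.2.trans h1) (not_le.mpr hk.1)

lemma Ik_disjoint {k j : ℕ} {t : ℝ} (hk : t ∈ Ioc ((2:ℝ) ^ (-(k:ℤ)-1)) ((2:ℝ) ^ (-(k:ℤ))))
    (hj : t ∈ Ioc ((2:ℝ) ^ (-(j:ℤ)-1)) ((2:ℝ) ^ (-(j:ℤ)))) : k = j := by
  rcases lt_trichotomy k j with h | h | h
  · exact absurd (Ik_lt_absurd h hk hj) not_false
  · exact h
  · exact absurd (Ik_lt_absurd h hj hk) not_false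

lemma hlow_le (m : ℕ) (t : ℝ) : hlow m t ≤ (wfun m t)^2 := by
  by_cases hex : ∃ k ∈ Finset.Ico (nseq m) (nseq (m+1)),
      t ∈ Ioc ((2:ℝ) ^ (-(k:ℤ)-1)) ((2:ℝ) ^ (-(k:ℤ)))
  · obtain ⟨k₀, hk₀s, hk₀⟩ := hex
    have hsum : hlow m t = (bseq k₀)^2 := by
      rw [hlow]
      rw [Finset.sum_eq_single_of_mem k₀ hk₀s]
      · rw [indicator_of_mem hk₀, mul_one]
      · intro j hjs hne
        rw [indicator_of_notMem, mul_zero]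
        intro hj
        exact hne (Ik_disjoint hj hk₀)
    rw [hsum]
    have htI : t ∈ Ioc (0:ℝ) ((2:ℝ) ^ (-(k₀:ℤ))) := ⟨lt_trans (by positivity) hk₀.1, hk₀.2⟩
    have hz : zfun k₀ t = bseq k₀ := by rw [zfun, indicator_of_mem htI, mul_one]
    have := (hz ▸ le_wfun m t k₀ hk₀s : bseq k₀ ≤ wfun m t)
    exact pow_le_pow_left₀ (bseq_pos k₀).le this 2
  · push_neg at hex
    have : hlow m t = 0 := by
      rw [hlow]
      exact Finset.sum_eq_zero fun k hk => by
        rw [indicator_of_notMem (hex k hk), mul_zero]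
    rw [this]
    positivity

lemma hlow_integral (m : ℕ) :
    (∫ t in Icc (0:ℝ) 1, hlow m t)
      = ∑ k ∈ Finset.Ico (nseq m) (nseq (m+1)), (1:ℝ) / (2 * ((k:ℝ) + 2)) := by
  have hterm : ∀ k : ℕ, IntegrableOn
      (fun t => (bseq k)^2 * (Ioc ((2:ℝ) ^ (-(k:ℤ)-1)) ((2:ℝ) ^ (-(k:ℤ)))).indicator
        (fun _ => (1:ℝ)) t) (Icc (0:ℝ) 1) volume := by
    intro k
    apply Integrable.const_mul
    exact (integrable_indicator_iff measurableSet_Ioc).mpr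
      (integrableOn_const (ne_of_lt (by
        rw [Measure.restrict_apply measurableSet_Ioc]
        exact lt_of_le_of_lt (measure_mono inter_subset_left) measure_Ioc_lt_top)))
  simp only [hlow]
  have : (∫ t in Icc (0:ℝ) 1, ∑ k ∈ Finset.Ico (nseq m) (nseq (m+1)),
      (bseq k)^2 * (Ioc ((2:ℝ) ^ (-(k:ℤ)-1)) ((2:ℝ) ^ (-(k:ℤ)))).indicator (fun _ => (1:ℝ)) t)
      = ∑ k ∈ Finset.Ico (nseq m) (nseq (m+1)), ∫ t in Icc (0:ℝ) 1,
      (bseq k)^2 * (Ioc ((2:ℝ) ^ (-(k:ℤ)-1)) ((2:ℝ) ^ (-(k:ℤ)))).indicator (fun _ => (1:ℝ)) t :=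
    integral_finset_sum _ (fun k _ => hterm k)
  rw [this]
  refine Finset.sum_congr rfl (fun k _ => ?_)
  have hsub : Ioc ((2:ℝ) ^ (-(k:ℤ)-1)) ((2:ℝ) ^ (-(k:ℤ))) ⊆ Icc (0:ℝ) 1 :=
    fun t ht => ⟨le_of_lt (lt_trans (by positivity) ht.1), ht.2.trans (two_zpow_le_one k)⟩
  rw [integral_const_mul, integral_indicator measurableSet_Ioc,
    Measure.restrict_restrict measurableSet_Ioc, inter_eq_self_of_subset_left hsub,
    setIntegral_const, smul_eq_mul, mul_one,
    Real.volume_real_Ioc_of_le (by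
      have : ((2:ℝ) ^ (-(k:ℤ)-1)) ≤ (2:ℝ) ^ (-(k:ℤ)) :=
        zpow_le_zpow_right₀ (by norm_num) (by omega)
      linarith)]
  -- now: (bseq k)^2 * (2^(-k) - 2^(-k-1)) = 1 / (2 * (k + 2))
  have hk2 : (0:ℝ) < (k:ℝ) + 2 := by positivity
  have e1 : ((k:ℝ)+2) ^ (-(1:ℝ)/2) * ((k:ℝ)+2) ^ (-(1:ℝ)/2) = ((k:ℝ)+2)⁻¹ := by
    rw [← Real.rpow_add hk2, show -(1:ℝ)/2 + -(1:ℝ)/2 = -1 by ring, Real.rpow_neg_one]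
  have e2 : (2:ℝ) ^ ((k:ℝ)/2) * (2:ℝ) ^ ((k:ℝ)/2) * (2:ℝ) ^ (-(k:ℤ)) = 1 := by
    rw [← Real.rpow_intCast 2 (-(k:ℤ)), ← Real.rpow_add (by norm_num : (0:ℝ) < 2),
      ← Real.rpow_add (by norm_num : (0:ℝ) < 2)]
    rw [show (k:ℝ)/2 + (k:ℝ)/2 + ((-(k:ℤ) : ℤ) : ℝ) = 0 by push_cast; ring, Real.rpow_zero]
  have hbs : (bseq k)^2 * (2:ℝ) ^ (-(k:ℤ)) = ((k:ℝ)+2)⁻¹ := by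
    have : (bseq k)^2 * (2:ℝ) ^ (-(k:ℤ))
        = (((k:ℝ)+2) ^ (-(1:ℝ)/2) * ((k:ℝ)+2) ^ (-(1:ℝ)/2))
          * ((2:ℝ) ^ ((k:ℝ)/2) * (2:ℝ) ^ ((k:ℝ)/2) * (2:ℝ) ^ (-(k:ℤ))) := by
      rw [bseq]; ring
    rw [this, e1, e2, mul_one]
  have hhalf : (2:ℝ) ^ (-(k:ℤ)-1) = (2:ℝ) ^ (-(k:ℤ)) / 2 := by
    rw [zpow_sub_one₀ (by norm_num : (2:ℝ) ≠ 0)]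
    ring
  rw [hhalf]
  have : (bseq k)^2 * ((2:ℝ) ^ (-(k:ℤ)) - (2:ℝ) ^ (-(k:ℤ)) / 2)
      = ((bseq k)^2 * (2:ℝ) ^ (-(k:ℤ))) / 2 := by ring
  rw [this, hbs]
  field_simp

lemma wfun_sq_integrable (m : ℕ) :
    IntegrableOn (fun t => (wfun m t)^2) (Icc (0:ℝ) 1) volume := by
  set B := ∑ k ∈ Finset.Ico (nseq m) (nseq (m+1)), bseq k with hB
  refine Measure.integrableOn_of_bounded (μ := volume) (M := B^2) ?_ ?_ ?_
  · exact (measure_Icc_lt_top).ne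
  · exact ((wfun_measurable m).pow_const 2).aestronglyMeasurable
  · refine Eventually.of_forall (fun t => ?_)
    have h1 : wfun m t ≤ B := by
      refine (wfun_le_sum m t).trans (Finset.sum_le_sum fun k _ => zfun_le k t)
    rw [Real.norm_eq_abs, abs_of_nonneg (by positivity)]
    exact pow_le_pow_left₀ (wfun_nonneg m t) h1 2

lemma wnorm_ge_half (m : ℕ) : (1:ℝ)/2 ≤ wnorm m := by
  have hn1 : 1 ≤ nseq (m+1) := by
    have := nseq_lt m
    omega
  have hsum : (1:ℝ)/3 ≤ ∑ k ∈ Finset.Ico (nseq m) (nseq (m+1)), (1:ℝ) / (2*((k:ℝ) + 2)) := by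
    have hgt := nseq_sum_gt m
    have hle : (1:ℝ) / ((nseq (m+1):ℝ) + 2) ≤ 1/3 := by
      apply div_le_div_of_nonneg_left (by norm_num) (by norm_num)
      have : (1:ℝ) ≤ (nseq (m+1) : ℝ) := by exact_mod_cast hn1
      linarith
    have he : ∑ k ∈ Finset.Ico (nseq m) (nseq (m+1)), (1:ℝ) / (2*((k:ℝ) + 2))
        = (1/2) * ∑ k ∈ Finset.Ico (nseq m) (nseq (m+1)), (1:ℝ) / ((k:ℝ) + 2) := by
      rw [Finset.mul_sum]
      exact Finset.sum_congr rfl fun k _ => by field_simp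
    rw [he]
    have h23 : (2:ℝ)/3 ≤ ∑ k ∈ Finset.Ico (nseq m) (nseq (m+1)), (1:ℝ) / ((k:ℝ) + 2) := by
      linarith
    linarith
  have hint : (1:ℝ)/4 ≤ ∫ t in Icc (0:ℝ) 1, (wfun m t)^2 := by
    have hmono : (∫ t in Icc (0:ℝ) 1, hlow m t) ≤ ∫ t in Icc (0:ℝ) 1, (wfun m t)^2 := by
      apply integral_mono_of_nonneg
      · refine Eventually.of_forall (fun t => ?_)
        simp only [Pi.zero_apply, hlow]
        exact Finset.sum_nonneg fun k _ => mul_nonneg (by positivity)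
          (indicator_nonneg (fun _ _ => zero_le_one) t)
      · exact wfun_sq_integrable m
      · exact Eventually.of_forall (fun t => hlow_le m t)
    rw [hlow_integral m] at hmono
    nlinarith [hmono, hsum]
  rw [wnorm]
  calc (1:ℝ)/2 = Real.sqrt (1/4) := by
        rw [show (1:ℝ)/4 = (1/2)^2 by norm_num, Real.sqrt_sq (by norm_num)]
    _ ≤ _ := Real.sqrt_le_sqrt hint


/-! ### standalone pointwise bounds -/

def g1 (b : ℝ) : ℝ → ℝ := (Ioc (0:ℝ) b).indicator
    (fun t => b ^ (-(1:ℝ)/2) * ((2:ℝ) ^ (-(1:ℝ)/2) * t ^ (-(1:ℝ)/2)))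

lemma g1_nonneg (b : ℝ) (hb : 0 < b) (t : ℝ) : 0 ≤ g1 b t := by
  refine indicator_nonneg (fun t' ht' => ?_) t
  have h0 : (0:ℝ) < t' := ht'.1
  positivity

lemma g1_integrable {b : ℝ} (hb : 0 < b) : IntegrableOn (g1 b) (Ioc (0:ℝ) 1) volume := by
  have hbase : IntegrableOn
      (fun t : ℝ => b ^ (-(1:ℝ)/2) * ((2:ℝ) ^ (-(1:ℝ)/2) * t ^ (-(1:ℝ)/2)))
      (Ioc (0:ℝ) b) volume :=
    (((half_int b hb).1.const_mul _).const_mul _)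
  exact (hbase.integrable_indicator measurableSet_Ioc).integrableOn

lemma g1_integral_le {b : ℝ} (hb : 0 < b) (hb1 : b ≤ 1) :
    (∫ t in Ioc (0:ℝ) 1, g1 b t) ≤ 2 := by
  have hval : (∫ t in Ioc (0:ℝ) 1, g1 b t)
      = b ^ (-(1:ℝ)/2) * ((2:ℝ) ^ (-(1:ℝ)/2) * (2 * b ^ ((1:ℝ)/2))) := by
    rw [g1, integral_indicator measurableSet_Ioc,
      Measure.restrict_restrict measurableSet_Ioc,
      inter_eq_self_of_subset_left (Ioc_subset_Ioc le_rfl hb1),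
      integral_const_mul, integral_const_mul, (half_int b hb).2]
  rw [hval]
  have hbb : b ^ (-(1:ℝ)/2) * b ^ ((1:ℝ)/2) = 1 := by
    rw [← Real.rpow_add hb]; norm_num
  have h2 : (2:ℝ) ^ (-(1:ℝ)/2) ≤ 1 := by
    rw [show -(1:ℝ)/2 = -(1/2) by ring, Real.rpow_neg (by norm_num), inv_le_one_iff₀]
    right
    exact Real.one_le_rpow (by norm_num) (by norm_num)
  calc b ^ (-(1:ℝ)/2) * ((2:ℝ) ^ (-(1:ℝ)/2) * (2 * b ^ ((1:ℝ)/2)))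
      = (2:ℝ) ^ (-(1:ℝ)/2) * 2 * (b ^ (-(1:ℝ)/2) * b ^ ((1:ℝ)/2)) := by ring
    _ = (2:ℝ) ^ (-(1:ℝ)/2) * 2 := by rw [hbb, mul_one]
    _ ≤ 2 := by nlinarith [Real.rpow_nonneg (show (0:ℝ) ≤ 2 by norm_num) (-(1:ℝ)/2)]

lemma vdiv_le_g1 {b : ℝ} (hb : 0 < b) {t : ℝ} (ht : t ∈ Ioc (0:ℝ) 1) :
    (b ^ (-(1:ℝ)/2) * (Ioo (0:ℝ) b).indicator (fun _ => (1:ℝ)) t) / psiF t ≤ g1 b t := by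
  by_cases h : t ∈ Ioo (0:ℝ) b
  · rw [g1]
    simp only [indicator_of_mem h, indicator_of_mem (Ioo_subset_Ioc_self h)]
    rw [mul_one, div_eq_mul_one_div, mul_comm ((2:ℝ) ^ (-(1:ℝ)/2))]
    exact mul_le_mul_of_nonneg_left
      (one_div_psiF_le ht.1 two_pos (logb_ge_two ht.1 ht.2)) (Real.rpow_nonneg hb.le _)
  · rw [g1]
    simp only [indicator_of_notMem h, mul_zero, zero_div]
    exact g1_nonneg b hb t

lemma wdiv_le_G (m : ℕ) {t : ℝ} (ht : t ∈ Ioc (0:ℝ) 1) :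
    wfun m t / psiF t ≤ ∑ k ∈ Finset.Ico (nseq m) (nseq (m+1)), gmaj k t := by
  calc wfun m t / psiF t
      ≤ (∑ k ∈ Finset.Ico (nseq m) (nseq (m+1)), zfun k t) / psiF t := by
        rw [div_eq_mul_inv, div_eq_mul_inv]
        exact mul_le_mul_of_nonneg_right (wfun_le_sum m t)
          (inv_nonneg.mpr (psiF_pos ht.1 ht.2).le)
    _ = ∑ k ∈ Finset.Ico (nseq m) (nseq (m+1)), zfun k t / psiF t := by
        rw [Finset.sum_div]
    _ ≤ _ := Finset.sum_le_sum (fun k _ => zdiv_le_gmaj k ht)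

lemma G_integral_le (m : ℕ) :
    (∫ t in Ioc (0:ℝ) 1, ∑ k ∈ Finset.Ico (nseq m) (nseq (m+1)), gmaj k t) ≤ 2 := by
  rw [integral_finset_sum _ (fun k _ => gmaj_integrable k)]
  have hval : ∑ k ∈ Finset.Ico (nseq m) (nseq (m+1)), (∫ t in Ioc (0:ℝ) 1, gmaj k t)
      = 2 * ∑ k ∈ Finset.Ico (nseq m) (nseq (m+1)), (1:ℝ) / ((k:ℝ) + 2) := by
    rw [Finset.mul_sum]
    exact Finset.sum_congr rfl (fun k _ => by rw [gmaj_integral]; ring)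
  rw [hval]
  have := nseq_mem m
  simp only [Set.mem_setOf_eq] at this
  linarith

/-! ### psiF monotone, rearr bound -/

lemma psiF_mono {s t : ℝ} (hs : 0 < s) (hst : s ≤ t) (ht1 : t ≤ 1) : psiF s ≤ psiF t := by
  have ht : 0 < t := lt_of_lt_of_le hs hst
  have hl2 : (0.6931471803:ℝ) < Real.log 2 := Real.log_two_gt_d9
  have l0 : (0:ℝ) < Real.log 2 := by linarith
  have hlog : Real.log (t/s) ≤ t/s - 1 := Real.log_le_sub_one_of_pos (by positivity)
  have hld : Real.log (t/s) = Real.log t - Real.log s := Real.log_div ht.ne' hs.ne'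
  have hs' : s * (Real.log t - Real.log s) ≤ t - s := by
    have h := mul_le_mul_of_nonneg_left hlog hs.le
    rw [hld] at h
    calc s * (Real.log t - Real.log s) ≤ s * (t/s - 1) := h
      _ = t - s := by field_simp
  have hlt0 : Real.log t ≤ 0 := Real.log_nonpos ht.le ht1
  have hprod : (t - s) * Real.log t ≤ 0 :=
    mul_nonpos_of_nonneg_of_nonpos (by linarith) hlt0
  have hfac : 0 ≤ (t - s) * (2 * Real.log 2 - 1) :=
    mul_nonneg (by linarith) (by linarith)
  have goal' : s * (2 * Real.log 2 - Real.log s) ≤ t * (2 * Real.log 2 - Real.log t) := by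
    nlinarith [hs', hprod, hfac]
  have hkey : s * Real.logb 2 (4/s) ≤ t * Real.logb 2 (4/t) := by
    rw [logb_four_div hs, logb_four_div ht, Real.logb, Real.logb]
    have e1 : s * (2 - Real.log s / Real.log 2) = s * (2 * Real.log 2 - Real.log s) / Real.log 2 := by
      field_simp
    have e2 : t * (2 - Real.log t / Real.log 2) = t * (2 * Real.log 2 - Real.log t) / Real.log 2 := by
      field_simp
    rw [e1, e2]
    exact div_le_div_of_nonneg_right goal' l0.le
  have hrw : ∀ x : ℝ, 0 < x → x ≤ 1 → psiF x = (x * Real.logb 2 (4/x)) ^ ((1:ℝ)/2) := by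
    intro x hx hx1
    rw [psiF, ← Real.mul_rpow hx.le (by linarith [logb_ge_two hx hx1])]
  rw [hrw s hs (hst.trans ht1), hrw t ht ht1]
  exact Real.rpow_le_rpow
    (mul_nonneg hs.le (by linarith [logb_ge_two hs (hst.trans ht1)])) hkey (by norm_num)

lemma rearr_le_one_div_psiF {t : ℝ} (ht : t ∈ Ioc (0:ℝ) 1) :
    rearr (fun u => 1 / psiF u) t ≤ 1 / psiF t := by
  have hpt := psiF_pos ht.1 ht.2
  apply csInf_le ⟨0, fun τ hτ => hτ.1⟩
  refine ⟨by positivity, ?_⟩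
  have hsub : {s | s ∈ Icc (0:ℝ) 1 ∧ 1 / psiF t < |(fun u => 1 / psiF u) s|} ⊆ Ico 0 t := by
    rintro s ⟨hs01, hgt⟩
    refine ⟨hs01.1, ?_⟩
    by_contra hlt
    push_neg at hlt
    have hs0 : 0 < s := lt_of_lt_of_le ht.1 hlt
    have hmono : psiF t ≤ psiF s := psiF_mono ht.1 hlt hs01.2
    have hps : 0 < psiF s := psiF_pos hs0 hs01.2
    simp only [abs_of_nonneg (le_of_lt (by positivity : (0:ℝ) < 1 / psiF s))] at hgt
    have : 1 / psiF s ≤ 1 / psiF t := one_div_le_one_div_of_le hpt hmono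
    linarith
  calc distr (fun u => 1/psiF u) (1/psiF t)
      ≤ volume (Ico (0:ℝ) t) := measure_mono hsub
    _ = ENNReal.ofReal t := by rw [Real.volume_Ico, sub_zero]

/-! ### Parts (iii), (iv) -/

lemma partC (v : ℝ → ℝ) (hv : v ∈ Vset) :
    (∫ t in Ioc (0:ℝ) 1, v t / psiF t) ≤ 4 := by
  rcases hv with ⟨b, hb, hb1, rfl⟩ | ⟨m, rfl⟩
  · exact le_trans (partA2 hb hb1) (by norm_num)
  · have hwn : (0:ℝ) < wnorm m := lt_of_lt_of_le (by norm_num) (wnorm_ge_half m)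
    have heq : (∫ t in Ioc (0:ℝ) 1, (wfun m t / wnorm m) / psiF t)
        = (∫ t in Ioc (0:ℝ) 1, (wfun m t / psiF t) * (1 / wnorm m)) :=
      integral_congr_ae (Eventually.of_forall fun t => by ring)
    rw [heq, integral_mul_const]
    have h1 : (∫ t in Ioc (0:ℝ) 1, wfun m t / psiF t) ≤ 2 := partB m
    have h2 : (1:ℝ) / wnorm m ≤ 2 := by
      rw [div_le_iff₀ hwn]
      linarith [wnorm_ge_half m]
    have h3 : (0:ℝ) ≤ 1 / wnorm m := by positivity
    calc (∫ t in Ioc (0:ℝ) 1, wfun m t / psiF t) * (1 / wnorm m)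
        ≤ 2 * (1 / wnorm m) := mul_le_mul_of_nonneg_right h1 h3
      _ ≤ 2 * 2 := by nlinarith
      _ = 4 := by norm_num

lemma lint_le_four {v : ℝ → ℝ} (G : ℝ → ℝ)
    (hGint : IntegrableOn G (Ioc (0:ℝ) 1) volume)
    (hGnn : ∀ t, 0 ≤ G t)
    (hGval : (∫ t in Ioc (0:ℝ) 1, G t) ≤ 4)
    (hle : ∀ t ∈ Ioc (0:ℝ) 1, rearr (fun u => 1 / psiF u) t * v t ≤ G t) :
    (∫⁻ t in Ioc (0:ℝ) 1, ENNReal.ofReal (rearr (fun u => 1 / psiF u) t * v t)) ≤ 4 := by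
  calc (∫⁻ t in Ioc (0:ℝ) 1, ENNReal.ofReal (rearr (fun u => 1 / psiF u) t * v t))
      ≤ ∫⁻ t in Ioc (0:ℝ) 1, ENNReal.ofReal (G t) := by
        refine lintegral_mono_ae ?_
        filter_upwards [ae_restrict_mem measurableSet_Ioc] with t ht
        exact ENNReal.ofReal_le_ofReal (hle t ht)
    _ = ENNReal.ofReal (∫ t in Ioc (0:ℝ) 1, G t) :=
        (ofReal_integral_eq_lintegral_ofReal hGint
          (Eventually.of_forall fun t => hGnn t)).symm
    _ ≤ ENNReal.ofReal 4 := ENNReal.ofReal_le_ofReal hGval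
    _ = 4 := by norm_num

lemma partD : Fnorm (fun t => 1 / psiF t) ≤ 4 := by
  rw [Fnorm]
  refine iSup₂_le fun v hv => ?_
  have hrearr : ∀ t ∈ Ioc (0:ℝ) 1,
      rearr (fun u => 1 / psiF u) t ≤ 1 / psiF t := fun t ht => rearr_le_one_div_psiF ht
  rcases hv with ⟨b, hb, hb1, rfl⟩ | ⟨m, rfl⟩
  · refine lint_le_four (g1 b) (g1_integrable hb) (g1_nonneg b hb)
      ((g1_integral_le hb hb1).trans (by norm_num)) (fun t ht => ?_)
    have hvnn : 0 ≤ b ^ (-(1:ℝ)/2) * (Ioo (0:ℝ) b).indicator (fun _ => (1:ℝ)) t :=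
      mul_nonneg (Real.rpow_nonneg hb.le _) (indicator_nonneg (fun _ _ => zero_le_one) t)
    calc rearr (fun u => 1 / psiF u) t
          * (b ^ (-(1:ℝ)/2) * (Ioo (0:ℝ) b).indicator (fun _ => (1:ℝ)) t)
        ≤ (1 / psiF t) * (b ^ (-(1:ℝ)/2) * (Ioo (0:ℝ) b).indicator (fun _ => (1:ℝ)) t) :=
          mul_le_mul_of_nonneg_right (hrearr t ht) hvnn
      _ = (b ^ (-(1:ℝ)/2) * (Ioo (0:ℝ) b).indicator (fun _ => (1:ℝ)) t) / psiF t := by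
          ring
      _ ≤ g1 b t := vdiv_le_g1 hb ht
  · have hwn : (0:ℝ) < wnorm m := lt_of_lt_of_le (by norm_num) (wnorm_ge_half m)
    set G : ℝ → ℝ := fun t => (∑ k ∈ Finset.Ico (nseq m) (nseq (m+1)), gmaj k t) / wnorm m
      with hG
    have hGint : IntegrableOn G (Ioc (0:ℝ) 1) volume :=
      (integrable_finset_sum _ (fun k _ => gmaj_integrable k)).div_const _
    have hGnn : ∀ t, 0 ≤ G t := fun t =>
      div_nonneg (Finset.sum_nonneg fun k _ => gmaj_nonneg k t) hwn.le
    have hGval : (∫ t in Ioc (0:ℝ) 1, G t) ≤ 4 := by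
      rw [hG, integral_div]
      have h2 : (∫ t in Ioc (0:ℝ) 1,
          ∑ k ∈ Finset.Ico (nseq m) (nseq (m+1)), gmaj k t) ≤ 2 := G_integral_le m
      have hnn : (0:ℝ) ≤ ∫ t in Ioc (0:ℝ) 1,
          ∑ k ∈ Finset.Ico (nseq m) (nseq (m+1)), gmaj k t :=
        integral_nonneg fun t => Finset.sum_nonneg fun k _ => gmaj_nonneg k t
      rw [div_le_iff₀ hwn]
      nlinarith [wnorm_ge_half m]
    refine lint_le_four G hGint hGnn hGval (fun t ht => ?_)
    have hvnn : 0 ≤ wfun m t / wnorm m := div_nonneg (wfun_nonneg m t) hwn.le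
    calc rearr (fun u => 1 / psiF u) t * (wfun m t / wnorm m)
        ≤ (1 / psiF t) * (wfun m t / wnorm m) :=
          mul_le_mul_of_nonneg_right (hrearr t ht) hvnn
      _ = (wfun m t / psiF t) * (1 / wnorm m) := by ring
      _ ≤ (∑ k ∈ Finset.Ico (nseq m) (nseq (m+1)), gmaj k t) * (1 / wnorm m) :=
          mul_le_mul_of_nonneg_right (wdiv_le_G m ht) (by positivity)
      _ = G t := by rw [hG]; ring

/-! ### Main theorem -/

/-- The estimates showing `1/ψ ∈ F`: `∫₀^b dt/ψ(t) ≤ 2 b^{1/2}` (so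
`∫₀¹ b^{-1/2}χ_{(0,b)}/ψ ≤ 2`), `∫₀¹ w_m/ψ ≤ 2`, hence `∫₀¹ v/ψ ≤ 4` for every `v ∈ V`
and `‖1/ψ‖_F ≤ 4`. -/
theorem one_div_psi_mem_F :
    (∀ b ∈ Set.Ioc (0:ℝ) 1,
      (∫ t in Set.Ioc (0:ℝ) b,
          t ^ (-(1:ℝ)/2) * (Real.logb 2 (4 / t)) ^ (-(1:ℝ)/2)) ≤ 2 * b ^ ((1:ℝ)/2) ∧
      (∫ t in Set.Ioc (0:ℝ) 1,
          (b ^ (-(1:ℝ)/2) * (Set.Ioo (0:ℝ) b).indicator (fun _ => (1:ℝ)) t) / psiF t) ≤ 2) ∧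
    (∀ m : ℕ, (∫ t in Set.Ioc (0:ℝ) 1, wfun m t / psiF t) ≤ 2) ∧
    (∀ v ∈ Vset, (∫ t in Set.Ioc (0:ℝ) 1, v t / psiF t) ≤ 4) ∧
    Fnorm (fun t => 1 / psiF t) ≤ 4 := by
  exact ⟨fun b hb => ⟨partA hb.1 hb.2, partA2 hb.1 hb.2⟩, partB, partC, partD⟩

end
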